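/- arXiv:1502.07934 — 2 statements merged into one kernel-verified Lean document; each statement's English description precedes it below -/
import Mathlib

section
/- (Anderson's theorem) Let a, b ≥ 1 be coprime integers. Then the set of (a,b)-core partitions is finite and its cardinality equals the rational Catalan number Cat_{a,b} = (1/(a+b))·C(a+b, a). -/
/-- A partition, encoded by its weakly decreasing, eventually zero sequence of parts;
`parts j` is the `(j+1)`-st part `λ_{j+1}`. -/
structure PartitionSeq where
  parts : ℕ → ℕ
  antitone : ∀ ⦃i j : ℕ⦄, i ≤ j → parts j ≤ parts i
  eventually_zero : ∃ N, parts N = 0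

namespace PartitionSeq

/-- The beta-set `{λ_j − j : j ≥ 1}` of a partition (with trailing zero parts included). -/
def betaSet (lam : PartitionSeq) : Set ℤ :=
  Set.range fun j : ℕ => (lam.parts j : ℤ) - (j + 1)

/-- The hook length of the cell in row `i`, column `j` (both 0-indexed): one plus the
number of cells to its right in its row plus the number of cells below it in its column. -/
noncomputable def hook (lam : PartitionSeq) (i j : ℕ) : ℕ :=
  (lam.parts i - j) + Set.ncard {i' : ℕ | i < i' ∧ j < lam.parts i'}

/-- `lam` is an `a`-core: no cell of its Young diagram has hook length `a`. -/
def IsCore (lam : PartitionSeq) (a : ℕ) : Prop :=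
  ∀ i j : ℕ, j < lam.parts i → lam.hook i j ≠ a

/-- The size `|λ| = λ₁ + λ₂ + ⋯` of a partition. -/
noncomputable def size (lam : PartitionSeq) : ℕ := ∑ᶠ j, lam.parts j

/-- The length (number of nonzero parts) of a partition. -/
noncomputable def length (lam : PartitionSeq) : ℕ := Set.ncard {j | 0 < lam.parts j}

/-- The `(j+1)`-st part of the conjugate (transpose) partition. -/
noncomputable def conjParts (lam : PartitionSeq) (j : ℕ) : ℕ :=
  Set.ncard {i | j < lam.parts i}

/-- A partition is self-conjugate if it equals its conjugate. -/
def SelfConjugate (lam : PartitionSeq) : Prop := ∀ j, lam.parts j = lam.conjParts j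

end PartitionSeq

/-- The set `B_a(c) = { −a(c_i + n) − i − 1 : 0 ≤ i ≤ a−1, n ∈ ℕ } ⊆ ℤ`. -/
def Bset (a : ℕ) (c : Fin a → ℤ) : Set ℤ :=
  {x | ∃ (i : Fin a) (n : ℕ), x = -(a : ℤ) * (c i + n) - i.val - 1}

/-!
A partition `λ` is recorded by its beta-set `β = {λⱼ - j}`, and `λ` is an `a`-core iff
`β - a ⊆ β`. So, up to translation, `(a,b)`-cores are the sets `S ⊆ ℤ` that are bounded
above, contain all sufficiently negative integers, and are stable under `x ↦ x - a` and
`x ↦ x - b`. Such an `S` is determined by the maxima `mᵢ` of its residue classes mod `a`;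
stability under `x ↦ x - b` says that `eᵢ = (b - (mᵢ - m_{i-b})) / a` is a natural number,
and `∑ eᵢ = b`. Because `b` generates `ZMod a`, the composition `e` determines `m` up to
adding a multiple of `a`, and every composition arises. Hence pairs (core, translation mod
`a`) are in bijection with the `C(a+b-1, b)` weak compositions of `b` into `a` parts, and
`a · #cores = C(a+b-1, b) = a/(a+b) · C(a+b, a)`.
-/

open Filter

namespace PartitionSeq

variable (lam : PartitionSeq)

@[ext]
lemma ext {lam lam' : PartitionSeq} (h : lam.parts = lam'.parts) : lam = lam' := by
  cases lam; cases lam'; congr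

lemma parts_eq_zero_of_le {N i : ℕ} (hN : lam.parts N = 0) (h : N ≤ i) : lam.parts i = 0 :=
  Nat.le_zero.mp (hN ▸ lam.antitone h)

lemma strictAnti_beta : StrictAnti fun j : ℕ => (lam.parts j : ℤ) - (j + 1) :=
  strictAnti_nat_of_succ_lt fun j => by
    have := lam.antitone (Nat.le_add_right j 1)
    push_cast
    omega

lemma lt_conjParts_iff {i j : ℕ} : i < lam.conjParts j ↔ j < lam.parts i := by
  have hex : ∃ n, lam.parts n ≤ j :=
    let ⟨N, hN⟩ := lam.eventually_zero
    ⟨N, hN ▸ Nat.zero_le j⟩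
  have hrows : {i | j < lam.parts i} = Set.Iio (Nat.find hex) := by
    ext i
    simp only [Set.mem_ofPred_eq, Set.mem_Iio, Nat.lt_find_iff, not_le]
    exact ⟨fun h m hm => h.trans_le (lam.antitone hm), fun h => h i le_rfl⟩
  rw [conjParts, hrows, Set.ncard_Iio_nat, ← Set.mem_Iio, ← hrows, Set.mem_ofPred_eq]

lemma conjParts_le_of_parts_le {i j : ℕ} (h : lam.parts i ≤ j) : lam.conjParts j ≤ i :=
  not_lt.mp fun hi => (lam.lt_conjParts_iff.mp hi).not_ge h

lemma hook_eq {i j : ℕ} (h : j < lam.parts i) :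
    (lam.hook i j : ℤ) = (lam.parts i : ℤ) - (i + 1) - ((j : ℤ) - lam.conjParts j) := by
  have hbelow : {i' : ℕ | i < i' ∧ j < lam.parts i'} = Set.Ico (i + 1) (lam.conjParts j) := by
    ext i'
    simp only [Set.mem_ofPred_eq, Set.mem_Ico, ← lam.lt_conjParts_iff]
    omega
  have hi : i < lam.conjParts j := lam.lt_conjParts_iff.mpr h
  rw [hook, hbelow, Set.ncard_Ico_nat, Nat.cast_add, Nat.cast_sub h.le, Nat.cast_sub hi]
  push_cast
  ring

/-- If `n` is the first row with `λₙ - n - 1 < t` and `t` is not a beta-number, then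
`t = j - λ'ⱼ` for `j = t + n`. -/
theorem not_mem_betaSet_iff {t : ℤ} :
    t ∉ lam.betaSet ↔ ∃ j : ℕ, (j : ℤ) - lam.conjParts j = t := by
  simp only [betaSet, Set.mem_range, not_exists]
  constructor
  · intro ht
    have hex : ∃ n, (lam.parts n : ℤ) - (n + 1) ≤ t := by
      obtain ⟨N, hN⟩ := lam.eventually_zero
      refine ⟨N + t.natAbs, ?_⟩
      rw [lam.parts_eq_zero_of_le hN (Nat.le_add_right _ _)]
      omega
    obtain ⟨n, hn, hmin⟩ : ∃ n, (lam.parts n : ℤ) - (n + 1) < t ∧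
        ∀ m < n, t < (lam.parts m : ℤ) - (m + 1) :=
      ⟨Nat.find hex, lt_of_le_of_ne (Nat.find_spec hex) (ht _),
        fun m hm => not_le.mp (Nat.find_min hex hm)⟩
    have hrows : lam.conjParts (t + n).toNat = n := by
      refine eq_of_forall_lt_iff fun i => ?_
      rw [lt_conjParts_iff]
      constructor
      · intro hi
        by_contra! hni
        have := lam.antitone hni
        omega
      · intro hi
        obtain ⟨n', rfl⟩ : ∃ n', n = n' + 1 := ⟨n - 1, by omega⟩
        have := hmin n' (Nat.lt_succ_self n')
        have := lam.antitone (Nat.le_of_lt_succ hi)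
        push_cast at *
        omega
    exact ⟨(t + n).toNat, by omega⟩
  · rintro ⟨j, rfl⟩ i hi
    rcases lt_or_ge j (lam.parts i) with h | h
    · have := lam.lt_conjParts_iff.mpr h
      omega
    · have := lam.conjParts_le_of_parts_le h
      omega

/-- By `hook_eq` and `not_mem_betaSet_iff`, the hook lengths in row `i` are the differences
`(λᵢ - i - 1) - t` with `t < λᵢ - i - 1` not in the beta-set. -/
theorem isCore_iff_sub_mem_betaSet (a : ℕ) :
    lam.IsCore a ↔ ∀ x ∈ lam.betaSet, x - a ∈ lam.betaSet := by
  constructor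
  · rintro hcore _ ⟨i, rfl⟩
    dsimp only
    by_contra hgap
    obtain ⟨j, hj⟩ := lam.not_mem_betaSet_iff.mp hgap
    have hji : j < lam.parts i := by
      by_contra! h
      have := lam.conjParts_le_of_parts_le h
      omega
    have := lam.hook_eq hji
    exact hcore i j hji (by omega)
  · intro hclosed i j hji hhook
    have := lam.hook_eq hji
    refine lam.not_mem_betaSet_iff.mpr ⟨j, rfl⟩ ?_
    convert hclosed _ ⟨i, rfl⟩ using 1
    dsimp only
    omega

lemma preimage_sub_betaSet (c : ℤ) :
    (· - c) ⁻¹' lam.betaSet = Set.range fun j : ℕ => (lam.parts j : ℤ) - (j + 1) + c := by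
  ext x
  simp only [Set.mem_preimage, betaSet, Set.mem_range]
  exact exists_congr fun j => by omega

theorem isCore_iff_sub_mem_preimage (a : ℕ) (c : ℤ) :
    lam.IsCore a ↔
      ∀ x ∈ (· - c) ⁻¹' lam.betaSet, x - a ∈ (· - c) ⁻¹' lam.betaSet := by
  simp only [isCore_iff_sub_mem_betaSet, Set.mem_preimage, sub_right_comm _ (a : ℤ) c]
  exact ⟨fun h x => h (x - c), fun h y => by simpa using h (y + c)⟩

lemma bddAbove_preimage_sub_betaSet (c : ℤ) : BddAbove ((· - c) ⁻¹' lam.betaSet) := by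
  rw [preimage_sub_betaSet]
  refine ⟨lam.parts 0 + c, ?_⟩
  rintro _ ⟨j, rfl⟩
  have := lam.antitone (Nat.zero_le j)
  dsimp only
  omega

lemma eventually_mem_preimage_sub_betaSet (c : ℤ) :
    ∀ᶠ x in atBot, x ∈ (· - c) ⁻¹' lam.betaSet := by
  obtain ⟨N, hN⟩ := lam.eventually_zero
  refine eventually_atBot.mpr ⟨c - N - 1, fun x hx => ⟨(c - x - 1).toNat, ?_⟩⟩
  simp only [lam.parts_eq_zero_of_le hN (show N ≤ (c - x - 1).toNat by omega)]
  omega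

theorem eq_of_preimage_sub_betaSet_eq {lam lam' : PartitionSeq} {c c' : ℤ}
    (h : (· - c) ⁻¹' lam.betaSet = (· - c') ⁻¹' lam'.betaSet) : lam = lam' ∧ c = c' := by
  have hanti (lam : PartitionSeq) (c : ℤ) :
      StrictAnti fun j : ℕ => (lam.parts j : ℤ) - (j + 1) + c :=
    fun i j hij => by simpa using lam.strictAnti_beta hij
  rw [preimage_sub_betaSet, preimage_sub_betaSet] at h
  have heq := ((hanti lam c).dual_right.range_inj (hanti lam' c').dual_right).mp h
  obtain ⟨N, hN⟩ := lam.eventually_zero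
  obtain ⟨N', hN'⟩ := lam'.eventually_zero
  have hc : c = c' := by
    have := congrFun heq (max N N')
    simp only [Function.comp_apply, lam.parts_eq_zero_of_le hN (le_max_left N N'),
      lam'.parts_eq_zero_of_le hN' (le_max_right N N'), OrderDual.toDual_inj] at this
    omega
  refine ⟨PartitionSeq.ext (funext fun j => ?_), hc⟩
  have := congrFun heq j
  simp only [Function.comp_apply, OrderDual.toDual_inj] at this
  omega

theorem exists_range_eq_preimage_sub_betaSet {f : ℕ → ℤ} (hf : StrictAnti f) {k : ℕ}
    (hk : ∀ m, f (k + m) = f k - m) :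
    ∃ (lam : PartitionSeq) (c : ℤ), Set.range f = (· - c) ⁻¹' lam.betaSet := by
  have hanti : Antitone fun j => f j + j := antitone_nat_of_succ_le fun j => by
    have := hf (Nat.lt_add_one j)
    push_cast
    omega
  have hge (j : ℕ) : f k + k ≤ f j + j := by
    rcases le_total j k with h | h
    · exact hanti h
    · obtain ⟨m, rfl⟩ := Nat.exists_eq_add_of_le h
      rw [hk]
      push_cast
      omega
  refine ⟨⟨fun j => (f j + j - (f k + k)).toNat, fun i j hij => ?_, k, by simp⟩,
    f k + k + 1, ?_⟩
  · have := hanti hij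
    dsimp only at this
    omega
  · rw [preimage_sub_betaSet]
    congr 1
    funext j
    have := hge j
    dsimp only
    omega

end PartitionSeq

theorem exists_strictAnti_range_eq {S : Set ℤ} (hbdd : BddAbove S)
    (hlow : ∀ᶠ x in atBot, x ∈ S) :
    ∃ f : ℕ → ℤ, StrictAnti f ∧ (∃ k, ∀ m, f (k + m) = f k - m) ∧ Set.range f = S := by
  classical
  obtain ⟨Y, hY⟩ := hbdd
  obtain ⟨X, hX⟩ := eventually_atBot.mp hlow
  set p : ℕ → Prop := fun n => Y - n ∈ S
  set N := (Y - X).toNat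
  have hpN (n : ℕ) (hn : N ≤ n) : p n := hX _ (by omega)
  have hinf : (Set.ofPred p).Infinite :=
    Set.infinite_of_forall_exists_gt fun n => ⟨max N (n + 1), hpN _ (le_max_left _ _), by omega⟩
  have hnth (m : ℕ) : Nat.nth p (Nat.count p N + m) = N + m := by
    have hcount : Nat.count p (N + m) = Nat.count p N + m := by
      rw [Nat.count_add, Nat.count_of_forall fun i _ => hpN _ (Nat.le_add_right N i)]
    rw [← hcount]
    exact Nat.nth_count (hpN _ (Nat.le_add_right N m))
  refine ⟨fun j => Y - Nat.nth p j, fun i j hij => ?_, ⟨Nat.count p N, fun m => ?_⟩, ?_⟩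
  · have := Nat.nth_strictMono hinf hij
    dsimp only
    omega
  · have h0 := hnth 0
    rw [add_zero] at h0
    simp only [hnth, h0]
    push_cast
    ring
  · ext x
    constructor
    · rintro ⟨j, rfl⟩
      exact Nat.nth_mem_of_infinite hinf j
    · intro hx
      obtain ⟨j, hj⟩ : (Y - x).toNat ∈ Set.range (Nat.nth p) := by
        rw [Nat.range_nth_of_infinite hinf]
        show Y - ((Y - x).toNat : ℕ) ∈ S
        rwa [Int.toNat_of_nonneg (by linarith [hY hx]), sub_sub_cancel]
      exact ⟨j, by have := hY hx; dsimp only; omega⟩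

theorem PartitionSeq.exists_eq_preimage_sub_betaSet {S : Set ℤ} (hbdd : BddAbove S)
    (hlow : ∀ᶠ x in atBot, x ∈ S) :
    ∃ (lam : PartitionSeq) (c : ℤ), S = (· - c) ⁻¹' lam.betaSet := by
  obtain ⟨f, hf, ⟨k, hk⟩, rfl⟩ := exists_strictAnti_range_eq hbdd hlow
  exact exists_range_eq_preimage_sub_betaSet hf hk

noncomputable def classMax (a : ℕ) (S : Set ℤ) (i : ZMod a) : ℤ :=
  sSup {x ∈ S | (x : ZMod a) = i}

section ClassMax

variable {a : ℕ} {S : Set ℤ}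

lemma classMax_eq {i : ZMod a} {m : ℤ} (hm : m ∈ S) (hmi : (m : ZMod a) = i)
    (hle : ∀ x ∈ S, (x : ZMod a) = i → x ≤ m) : classMax a S i = m :=
  IsGreatest.csSup_eq ⟨⟨hm, hmi⟩, fun x hx => hle x hx.1 hx.2⟩

lemma le_classMax (hbdd : BddAbove S) {x : ℤ} (hx : x ∈ S) : x ≤ classMax a S x :=
  le_csSup (hbdd.mono fun _ hy => hy.1) ⟨hx, rfl⟩

lemma classMax_setOf_le {m : ZMod a → ℤ} (hm : ∀ i, (m i : ZMod a) = i) :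
    classMax a {x : ℤ | x ≤ m x} = m :=
  funext fun i => classMax_eq (show m i ≤ m (m i) by rw [hm]) (hm i) fun x hx hxi => hxi ▸ hx

lemma sub_mul_mem (hsub : ∀ x ∈ S, x - a ∈ S) {x : ℤ} (hx : x ∈ S) (n : ℕ) :
    x - a * n ∈ S := by
  induction n with
  | zero => simpa using hx
  | succ n ih => simpa [mul_add, sub_add_eq_sub_sub] using hsub _ ih

variable [NeZero a]

lemma classMax_mem_residueClass (hbdd : BddAbove S) (hlow : ∀ᶠ x in atBot, x ∈ S)
    (i : ZMod a) : classMax a S i ∈ {x ∈ S | (x : ZMod a) = i} := by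
  refine Int.csSup_mem ?_ (hbdd.mono fun _ hx => hx.1)
  obtain ⟨X, hX⟩ := eventually_atBot.mp hlow
  have ha : (1 : ℤ) ≤ a := by exact_mod_cast NeZero.one_le
  have hX' : -(X.natAbs : ℤ) ≤ X := by omega
  refine ⟨i.val - a * (i.val + X.natAbs), hX _ (by nlinarith), ?_⟩
  simp

lemma classMax_mem (hbdd : BddAbove S) (hlow : ∀ᶠ x in atBot, x ∈ S) (i : ZMod a) :
    classMax a S i ∈ S :=
  (classMax_mem_residueClass hbdd hlow i).1

lemma intCast_classMax (hbdd : BddAbove S) (hlow : ∀ᶠ x in atBot, x ∈ S) (i : ZMod a) :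
    (classMax a S i : ZMod a) = i :=
  (classMax_mem_residueClass hbdd hlow i).2

theorem eq_setOf_le_classMax (hsub : ∀ x ∈ S, x - a ∈ S) (hbdd : BddAbove S)
    (hlow : ∀ᶠ x in atBot, x ∈ S) : S = {x : ℤ | x ≤ classMax a S x} := by
  ext x
  refine ⟨le_classMax hbdd, fun (hx : x ≤ classMax a S x) => ?_⟩
  obtain ⟨k, hk⟩ := (ZMod.intCast_eq_intCast_iff_dvd_sub x _ a).mp
    (intCast_classMax hbdd hlow (x : ZMod a)).symm
  have ha : (0 : ℤ) < a := by exact_mod_cast NeZero.pos a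
  have hk0 : 0 ≤ k := by nlinarith
  convert sub_mul_mem hsub (classMax_mem hbdd hlow (x : ZMod a)) k.toNat
  rw [Int.toNat_of_nonneg hk0]
  linarith

lemma classMax_preimage_sub (hbdd : BddAbove S) (hlow : ∀ᶠ x in atBot, x ∈ S) (t : ℤ)
    (i : ZMod a) : classMax a ((· - t) ⁻¹' S) i = classMax a S (i - (t : ZMod a)) + t := by
  refine classMax_eq (by simpa using classMax_mem hbdd hlow (i - (t : ZMod a))) ?_
    fun x hx hxi => ?_
  · push_cast [intCast_classMax hbdd hlow]
    ring
  · have := le_classMax (a := a) hbdd (show x - t ∈ S from hx)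
    push_cast [hxi] at this
    linarith

lemma classMax_sub_le {b : ℕ} (hsub : ∀ x ∈ S, x - b ∈ S) (hbdd : BddAbove S)
    (hlow : ∀ᶠ x in atBot, x ∈ S) (i : ZMod a) :
    classMax a S i - b ≤ classMax a S (i - b) := by
  have := le_classMax (a := a) hbdd (hsub _ (classMax_mem hbdd hlow i))
  rwa [Int.cast_sub, intCast_classMax hbdd hlow, Int.cast_natCast] at this

end ClassMax

noncomputable def gapCounts (a b : ℕ) (m : ZMod a → ℤ) (i : ZMod a) : ℕ :=
  ((b + m (i - b) - m i) / a).toNat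

section GapCounts

variable {a b : ℕ}

lemma mul_gapCounts {m : ZMod a → ℤ} (hm : ∀ i, (m i : ZMod a) = i)
    (hmb : ∀ i, m i - b ≤ m (i - b)) (i : ZMod a) :
    (a : ℤ) * gapCounts a b m i = b + m (i - b) - m i := by
  have hdvd : (a : ℤ) ∣ b + m (i - b) - m i := by
    rw [← ZMod.intCast_zmod_eq_zero_iff_dvd]
    push_cast [hm]
    ring
  have := hmb i
  rw [gapCounts, Int.toNat_of_nonneg (Int.ediv_nonneg (by omega) (Int.natCast_nonneg a)),
    Int.mul_ediv_cancel' hdvd]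

lemma gapCounts_add_const (m : ZMod a → ℤ) (t : ℤ) :
    gapCounts a b (fun i => m i + t) = gapCounts a b m := by
  ext i
  rw [gapCounts, gapCounts,
    show (b : ℤ) + (m (i - b) + t) - (m i + t) = b + m (i - b) - m i by ring]

variable [NeZero a]

lemma sum_gapCounts {m : ZMod a → ℤ} (hm : ∀ i, (m i : ZMod a) = i)
    (hmb : ∀ i, m i - b ≤ m (i - b)) : ∑ i, gapCounts a b m i = b := by
  have hshift : ∑ i : ZMod a, m (i - b) = ∑ i, m i :=
    Fintype.sum_equiv (Equiv.subRight (b : ZMod a)) _ _ fun _ => rfl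
  have ha : (a : ℤ) ≠ 0 := by exact_mod_cast NeZero.ne a
  have : (a : ℤ) * ∑ i, (gapCounts a b m i : ℤ) = a * b := by
    simp only [Finset.mul_sum, mul_gapCounts hm hmb, Finset.sum_sub_distrib,
      Finset.sum_add_distrib, hshift, Finset.sum_const, Finset.card_univ, ZMod.card]
    simp
  exact_mod_cast mul_left_cancel₀ ha this

variable (hab : Nat.Coprime a b)
include hab

lemma natCast_val_mul_inv (i : ZMod a) :
    (((i * (b : ZMod a)⁻¹).val : ℕ) : ZMod a) * b = i := by
  rw [ZMod.natCast_zmod_val, mul_assoc, mul_comm _ (b : ZMod a),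
    ZMod.coe_mul_inv_eq_one b hab.symm, mul_one]

lemma eq_of_apply_sub_eq {α : Type*} {d : ZMod a → α} (hd : ∀ i, d (i - b) = d i)
    (i j : ZMod a) : d i = d j := by
  have hiter : ∀ n : ℕ, d (i - n * b) = d i := fun n => by
    induction n with
    | zero => simp
    | succ n ih =>
      rw [← ih, ← hd (i - n * b)]
      push_cast
      ring_nf
  rw [← hiter ((i - j) * (b : ZMod a)⁻¹).val, natCast_val_mul_inv hab, sub_sub_cancel]

theorem exists_eq_add_of_gapCounts_eq {m m' : ZMod a → ℤ} (hm : ∀ i, (m i : ZMod a) = i)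
    (hmb : ∀ i, m i - b ≤ m (i - b)) (hm' : ∀ i, (m' i : ZMod a) = i)
    (hmb' : ∀ i, m' i - b ≤ m' (i - b)) (h : gapCounts a b m = gapCounts a b m') :
    ∃ z : ℤ, ∀ i, m' i = m i + a * z := by
  have hconst := eq_of_apply_sub_eq hab (d := fun i => m' i - m i) fun i => by
    have := mul_gapCounts hm hmb i
    have := mul_gapCounts hm' hmb' i
    rw [h] at *
    omega
  obtain ⟨z, hz⟩ := (ZMod.intCast_eq_intCast_iff_dvd_sub (m 0) (m' 0) a).mp (by rw [hm, hm'])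
  exact ⟨z, fun i => by have := hconst i 0; omega⟩

/-- `b` has order `a` in `ZMod a`, so `a` consecutive multiples of `b` run through `ZMod a`. -/
lemma sum_range_natCast_mul {M : Type*} [AddCommMonoid M] (f : ZMod a → M) (n : ℕ) :
    ∑ j ∈ Finset.range a, f (((n + j : ℕ) : ZMod a) * b) = ∑ i, f i := by
  have hinj : Function.Injective fun j : Fin a => (((n + j : ℕ) : ZMod a) * b) := by
    intro j j' hjj'
    have := congrArg (· * (b : ZMod a)⁻¹) hjj'
    simp only [mul_assoc, ZMod.coe_mul_inv_eq_one b hab.symm, mul_one, Nat.cast_add,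
      add_right_inj] at this
    have hmod := (ZMod.natCast_eq_natCast_iff' _ _ a).mp this
    rw [Nat.mod_eq_of_lt j.isLt, Nat.mod_eq_of_lt j'.isLt] at hmod
    exact Fin.ext hmod
  rw [← Fin.sum_univ_eq_sum_range (fun j => f (((n + j : ℕ) : ZMod a) * b)),
    ((Fintype.bijective_iff_injective_and_card _).mpr ⟨hinj, by simp⟩).sum_comp f]

/-- The solution is `m (n * b) = G n`, where `G n = b n - a (e b + e 2b + ⋯ + e nb)` is
`a`-periodic in `n` because `e` sums to `b`. -/
theorem exists_sub_eq_of_sum_eq (e : ZMod a → ℕ) (he : ∑ i, e i = b) :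
    ∃ m : ZMod a → ℤ, (∀ i, (m i : ZMod a) = i) ∧
      ∀ i, m i - m (i - b) = b - a * e i := by
  set G : ℕ → ℤ := fun n =>
    b * n - a * ∑ j ∈ Finset.range n, (e (((j + 1 : ℕ) : ZMod a) * b) : ℤ)
  have hG_succ (n : ℕ) : G (n + 1) = G n + b - a * e (((n + 1 : ℕ) : ZMod a) * b) := by
    simp only [G, Finset.sum_range_succ]
    push_cast
    ring
  have hG_periodic : Function.Periodic G a := fun n => by
    have hcycle : ∑ j ∈ Finset.range a, (e (((n + j + 1 : ℕ) : ZMod a) * b) : ℤ) = b := by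
      have := sum_range_natCast_mul hab e (n + 1)
      simp only [Nat.add_right_comm n 1, he] at this
      exact_mod_cast this
    simp only [G, Finset.sum_range_add, hcycle]
    push_cast
    ring
  have hG_cast (n : ℕ) : (G n : ZMod a) = n * b := by
    simp [G, mul_comm]
  set m : ZMod a → ℤ := fun i => G (i * (b : ZMod a)⁻¹).val
  have hm_mul (n : ℕ) : m (n * b) = G n := by
    simp only [m, mul_assoc, ZMod.coe_mul_inv_eq_one b hab.symm, mul_one, ZMod.val_natCast,
      hG_periodic.map_mod_nat]
  refine ⟨m, fun i => by rw [hG_cast, natCast_val_mul_inv hab], fun i => ?_⟩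
  obtain ⟨n, rfl⟩ : ∃ n : ℕ, i = ((n + 1 : ℕ) : ZMod a) * b :=
    ⟨(i * (b : ZMod a)⁻¹).val + a - 1, by
      rw [Nat.sub_add_cancel (by have := NeZero.one_le (n := a); omega)]
      push_cast
      rw [ZMod.natCast_self, add_zero, natCast_val_mul_inv hab]⟩
  have : ((n + 1 : ℕ) : ZMod a) * b - b = (n : ZMod a) * b := by push_cast; ring
  rw [this, hm_mul, hm_mul, hG_succ]
  ring

theorem exists_gapCounts_eq (e : ZMod a → ℕ) (he : ∑ i, e i = b) :
    ∃ m : ZMod a → ℤ, (∀ i, (m i : ZMod a) = i) ∧ (∀ i, m i - b ≤ m (i - b)) ∧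
      gapCounts a b m = e := by
  obtain ⟨m, hm, hstep⟩ := exists_sub_eq_of_sum_eq hab e he
  have hmb (i : ZMod a) : m i - b ≤ m (i - b) := by
    have := hstep i
    have : (0 : ℤ) ≤ a * e i := by positivity
    omega
  refine ⟨m, hm, hmb, funext fun i => ?_⟩
  have := mul_gapCounts hm hmb i
  have := hstep i
  have ha : (a : ℤ) ≠ 0 := by exact_mod_cast NeZero.ne a
  exact_mod_cast mul_left_cancel₀ ha (by omega : (a : ℤ) * gapCounts a b m i = a * e i)

end GapCounts

theorem card_sum_eq_choose (ι : Type*) [Fintype ι] [DecidableEq ι] (n : ℕ) :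
    Nat.card {e : ι → ℕ // ∑ i, e i = n} = (Fintype.card ι + n - 1).choose n := by
  let toSym : {e : ι → ℕ // ∑ i, e i = n} ≃ Sym ι n :=
    Equiv.subtypeEquiv (Finsupp.equivFunOnFinite.symm.trans Multiset.toFinsupp.symm.toEquiv)
      fun e => by simp [Multiset.toFinsupp_symm_apply, Finsupp.card_toMultiset, Finsupp.sum_fintype]
  rw [Nat.card_congr toSym, Nat.card_eq_fintype_card, Sym.card_sym_eq_choose]

namespace PartitionSeq

variable {a b : ℕ} (lam : PartitionSeq)

lemma preimage_sub_betaSet_eq_setOf_le [NeZero a] (ha : lam.IsCore a) (c : ℤ) :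
    (· - c) ⁻¹' lam.betaSet = {x : ℤ | x ≤ classMax a ((· - c) ⁻¹' lam.betaSet) x} :=
  eq_setOf_le_classMax ((lam.isCore_iff_sub_mem_preimage a c).mp ha)
    (lam.bddAbove_preimage_sub_betaSet c) (lam.eventually_mem_preimage_sub_betaSet c)

lemma intCast_classMax_preimage_sub_betaSet [NeZero a] (c : ℤ) (i : ZMod a) :
    (classMax a ((· - c) ⁻¹' lam.betaSet) i : ZMod a) = i :=
  intCast_classMax (lam.bddAbove_preimage_sub_betaSet c)
    (lam.eventually_mem_preimage_sub_betaSet c) i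

lemma classMax_preimage_sub_betaSet_sub_le [NeZero a] (hb : lam.IsCore b) (c : ℤ) (i : ZMod a) :
    classMax a ((· - c) ⁻¹' lam.betaSet) i - b ≤
      classMax a ((· - c) ⁻¹' lam.betaSet) (i - b) :=
  classMax_sub_le ((lam.isCore_iff_sub_mem_preimage b c).mp hb)
    (lam.bddAbove_preimage_sub_betaSet c) (lam.eventually_mem_preimage_sub_betaSet c) i

lemma classMax_preimage_sub_betaSet_add_mul [NeZero a] (c z : ℤ) :
    classMax a ((· - (c + a * z)) ⁻¹' lam.betaSet) =
      fun i => classMax a ((· - c) ⁻¹' lam.betaSet) i + a * z := by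
  have hsets :
      (· - (c + a * z)) ⁻¹' lam.betaSet = (· - a * z) ⁻¹' ((· - c) ⁻¹' lam.betaSet) := by
    ext x
    simp only [Set.mem_preimage, sub_sub, add_comm c]
  ext i
  rw [hsets, classMax_preimage_sub (lam.bddAbove_preimage_sub_betaSet c)
    (lam.eventually_mem_preimage_sub_betaSet c)]
  simp

end PartitionSeq

noncomputable def coreComposition (a b : ℕ) [NeZero a]
    (p : {lam : PartitionSeq // lam.IsCore a ∧ lam.IsCore b} × Fin a) :
    {e : ZMod a → ℕ // ∑ i, e i = b} :=
  ⟨gapCounts a b (classMax a ((· - (p.2 : ℕ)) ⁻¹' p.1.1.betaSet)),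
    sum_gapCounts (p.1.1.intCast_classMax_preimage_sub_betaSet _)
      (p.1.1.classMax_preimage_sub_betaSet_sub_le p.1.2.2 _)⟩

section CoreComposition

variable {a b : ℕ} [NeZero a] (hab : Nat.Coprime a b)
include hab

theorem coreComposition_injective : Function.Injective (coreComposition a b) := by
  rintro ⟨⟨lam, ha, hb⟩, k⟩ ⟨⟨lam', ha', hb'⟩, k'⟩ h
  obtain ⟨z, hz⟩ := exists_eq_add_of_gapCounts_eq hab
    (lam.intCast_classMax_preimage_sub_betaSet _) (lam.classMax_preimage_sub_betaSet_sub_le hb _)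
    (lam'.intCast_classMax_preimage_sub_betaSet _)
    (lam'.classMax_preimage_sub_betaSet_sub_le hb' _) (congrArg Subtype.val h)
  have hsets :
      (· - ((k : ℕ) + a * z)) ⁻¹' lam.betaSet = (· - ((k' : ℕ) : ℤ)) ⁻¹' lam'.betaSet := by
    rw [lam.preimage_sub_betaSet_eq_setOf_le ha, lam'.preimage_sub_betaSet_eq_setOf_le ha',
      lam.classMax_preimage_sub_betaSet_add_mul, funext hz]
  obtain ⟨rfl, hk⟩ := PartitionSeq.eq_of_preimage_sub_betaSet_eq hsets
  have hz0 : z = 0 := by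
    have := k.isLt
    have := k'.isLt
    rcases lt_trichotomy z 0 with hz | hz | hz <;> nlinarith
  subst hz0
  simp only [mul_zero, add_zero, Nat.cast_inj] at hk
  rw [Fin.ext hk]

theorem coreComposition_surjective : Function.Surjective (coreComposition a b) := by
  rintro ⟨e, he⟩
  obtain ⟨m, hm, hmb, rfl⟩ := exists_gapCounts_eq hab e he
  have hsub (n : ℕ) (hn : ∀ i, m i - n ≤ m (i - n)) :
      ∀ x ∈ {x : ℤ | x ≤ m x}, x - n ∈ {x : ℤ | x ≤ m x} := fun x (hx : x ≤ m x) => by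
    show x - n ≤ m ((x - n : ℤ) : ZMod a)
    push_cast
    linarith [hn x]
  have hbdd : BddAbove {x : ℤ | x ≤ m x} := by
    obtain ⟨Y, hY⟩ := (Set.finite_range m).bddAbove
    exact ⟨Y, fun x (hx : x ≤ m x) => hx.trans (hY ⟨_, rfl⟩)⟩
  have hlow : ∀ᶠ x in atBot, x ∈ {x : ℤ | x ≤ m x} := by
    obtain ⟨X, hX⟩ := (Set.finite_range m).bddBelow
    exact eventually_atBot.mpr ⟨X, fun x hx => hx.trans (hX ⟨_, rfl⟩)⟩
  obtain ⟨lam, c, hS⟩ := PartitionSeq.exists_eq_preimage_sub_betaSet hbdd hlow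
  have hcore (n : ℕ) (hn : ∀ i, m i - n ≤ m (i - n)) : lam.IsCore n :=
    (lam.isCore_iff_sub_mem_preimage n c).mpr (hS ▸ hsub n hn)
  have ha : (0 : ℤ) < a := by exact_mod_cast NeZero.pos a
  have hc : c = (c % a).toNat + a * (c / a) := by
    rw [Int.toNat_of_nonneg (Int.emod_nonneg c ha.ne'), Int.emod_add_mul_ediv]
  refine ⟨⟨⟨lam, hcore a fun i => by simp, hcore b hmb⟩,
    ⟨(c % a).toNat, by have := Int.emod_lt_of_pos c ha; omega⟩⟩, Subtype.ext ?_⟩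
  have hmax := lam.classMax_preimage_sub_betaSet_add_mul (a := a) (c % a).toNat (c / a)
  rw [← hc, ← hS, classMax_setOf_le hm] at hmax
  show gapCounts a b (classMax a ((· - (((c % a).toNat : ℕ) : ℤ)) ⁻¹' lam.betaSet)) =
    gapCounts a b m
  rw [hmax, gapCounts_add_const]

end CoreComposition

theorem stmt5_general (a b : ℕ) (ha : 1 ≤ a) (hab : Nat.Coprime a b) :
    {lam : PartitionSeq | lam.IsCore a ∧ lam.IsCore b}.Finite ∧
    (a + b) * Nat.card {lam : PartitionSeq // lam.IsCore a ∧ lam.IsCore b}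
      = Nat.choose (a + b) a := by
  have : NeZero a := ⟨by omega⟩
  have hcomp : Nat.card {e : ZMod a → ℕ // ∑ i, e i = b} = (a + b - 1).choose b := by
    rw [card_sum_eq_choose, ZMod.card]
  have : Finite {e : ZMod a → ℕ // ∑ i, e i = b} :=
    Nat.finite_of_card_ne_zero (hcomp ▸ (Nat.choose_pos (by omega)).ne')
  let Θ := Equiv.ofBijective _ ⟨coreComposition_injective hab, coreComposition_surjective hab⟩
  have hcard : Nat.card {lam : PartitionSeq // lam.IsCore a ∧ lam.IsCore b} * a =
      (a + b - 1).choose b := by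
    rw [← hcomp, ← Nat.card_congr Θ, Nat.card_prod, Nat.card_fin]
  refine ⟨?_, ?_⟩
  · have := Finite.of_equiv _ Θ.symm
    exact Set.finite_coe_iff.mp
      (Finite.prod_left (Fin a) : Finite {lam : PartitionSeq // lam.IsCore a ∧ lam.IsCore b})
  · apply Nat.eq_of_mul_eq_mul_right (show 0 < a by omega)
    obtain ⟨n, rfl⟩ : ∃ n, a = n + 1 := ⟨a - 1, by omega⟩
    rw [mul_assoc, hcard, Nat.add_right_comm, Nat.add_sub_cancel, ← Nat.choose_symm_add,
      Nat.add_one_mul_choose_eq, Nat.add_right_comm]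

/-- Anderson: for coprime `a, b ≥ 1` the set of `(a,b)`-core partitions is
finite, of cardinality `Cat_{a,b} = (1/(a+b))·C(a+b, a)`. -/
theorem stmt5 (a b : ℕ) (ha : 1 ≤ a) (hb : 1 ≤ b) (hab : Nat.Coprime a b) :
    {lam : PartitionSeq | lam.IsCore a ∧ lam.IsCore b}.Finite ∧
    (a + b) * Nat.card {lam : PartitionSeq // lam.IsCore a ∧ lam.IsCore b}
      = Nat.choose (a + b) a :=
  stmt5_general a b ha hab
end

section
/- Let a < b be coprime positive integers and let c = (c_0, …, c_{a−1}) ∈ ℤ^a with c_0 + ⋯ + c_{a−1} = 0 be such that λ = core_a(c) is a b-core (hence an (a,b)-core). Set x_i = c_i + i/a − (a−1)/(2a) for 0 ≤ i ≤ a−1 and write ⌊y⌋₀ = max(0, ⌊y⌋). Then the skew length of λ satisfies sℓ(λ) = Σ_{i=0}^{a−1} Σ_{j=0}^{a−1} ( ⌊x_i − x_j⌋₀ − ⌊x_i − x_j − b/a⌋₀ ). -/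
/-- The shifted coordinates `x_i = c_i + i/a − (a−1)/(2a)`. -/
def xcoord (a : ℕ) (c : Fin a → ℤ) (i : Fin a) : ℚ :=
  (c i : ℚ) + (i.val : ℚ) / a - ((a : ℚ) - 1) / (2 * a)

/-- Row `j` (0-indexed) of `lam` is an `a`-row: its part is maximal among the (nonzero)
parts `λ_{j'+1}` whose residue `λ_{j'+1} − (j'+1) (mod a)` agrees with that of row `j`. -/
def IsARow (a : ℕ) (lam : PartitionSeq) (j : ℕ) : Prop :=
  0 < lam.parts j ∧ ∀ j' : ℕ, 0 < lam.parts j' →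
    ((lam.parts j' : ℤ) - (j' + 1)) % a = ((lam.parts j : ℤ) - (j + 1)) % a →
    lam.parts j' ≤ lam.parts j

/-- The `(a,b)` skew length: the number of cells of `lam` lying in an `a`-row and in the
`b`-boundary (hook length `< b`). -/
noncomputable def skewLength (a b : ℕ) (lam : PartitionSeq) : ℕ :=
  Set.ncard {cell : ℕ × ℕ |
    IsARow a lam cell.1 ∧ cell.2 < lam.parts cell.1 ∧ lam.hook cell.1 cell.2 < b}

/-!
Write `β_r = λ_{r+1} - r - 1` for the beta-numbers. Column `j` of `λ` corresponds to the gap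
`j - λ'_{j+1}` of the beta-set, the cells of row `r` to the gaps `s < β_r`, and the cell over the
gap `s` has hook length `β_r - s`; so row `r` has as many cells in the `b`-boundary as there are
gaps in `(β_r - b, β_r)`.

For `λ = core_a(c)` every integer is uniquely `m_i + a t` with `m_i = -a c_i - i - 1`, and it is a
beta-number iff `t ≤ 0`; the `a`-rows are the rows with beta-number some `m_i`. Since
`m_i - m_j = a (x_j - x_i)`, the gaps in `(m_i - b, m_i)` congruent to `m_j` are the `m_j + a t`
with `t ≥ 1` and `x_j - x_i - b/a < t ≤ x_j - x_i`, and there are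
`⌊x_j - x_i⌋₀ - ⌊x_j - x_i - b/a⌋₀` of them.
-/

open Set Function

lemma Set.ncard_setOf_snd_mem {ι α : Type*} [Fintype ι] (T : ι → Set α)
    (hT : ∀ i, (T i).Finite) : {p : ι × α | p.2 ∈ T p.1}.ncard = ∑ i, (T i).ncard := by
  have hunion : {p : ι × α | p.2 ∈ T p.1} = ⋃ i, {i} ×ˢ T i := by
    ext ⟨i, x⟩
    simp
  rw [hunion, ncard_iUnion_of_finite (fun i => (finite_singleton i).prod (hT i)),
    finsum_eq_sum_of_fintype]
  · simp [ncard_prod]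
  · intro i j hij
    exact disjoint_left.2 fun p hi hj => hij ((mem_singleton_iff.1 hi.1).symm.trans hj.1)

lemma setOf_pos_int_mem_Ioc {K : Type*} [Ring K] [LinearOrder K] [FloorRing K] (z y : K) :
    {t : ℤ | 0 < t ∧ (t : K) ∈ Ioc z y} = Finset.Icc (max 1 (⌊z⌋ + 1)) ⌊y⌋ := by
  ext t
  simp only [mem_ofPred_eq, mem_Ioc, Finset.coe_Icc, mem_Icc, max_le_iff, Int.le_floor,
    ← Int.floor_lt, Int.add_one_le_iff, and_assoc]
  rfl

lemma ncard_pos_int_mem_Ioc {K : Type*} [Ring K] [LinearOrder K] [IsStrictOrderedRing K]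
    [FloorRing K] {z y : K} (h : z ≤ y) :
    ({t : ℤ | 0 < t ∧ (t : K) ∈ Ioc z y}.ncard : ℤ) = max 0 ⌊y⌋ - max 0 ⌊z⌋ := by
  have := Int.floor_le_floor h
  rw [setOf_pos_int_mem_Ioc, ncard_coe_finset, Int.card_Icc]
  omega

section SubClosed

variable {B : Set ℤ} {a : ℕ}

lemma sub_mul_mem_of_sub_mem (hB : ∀ s ∈ B, s - a ∈ B) {s : ℤ} (hs : s ∈ B) (n : ℕ) :
    s - a * n ∈ B := by
  induction n with
  | zero => simpa using hs
  | succ n ih => simpa [mul_add, sub_add_eq_sub_sub] using hB _ ih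

lemma Iio_subset_of_Ico_subset (ha : 0 < a) (hB : ∀ s ∈ B, s - a ∈ B) {x : ℤ}
    (hx : Ico x (x + a) ⊆ B) : Iio (x + a) ⊆ B := by
  intro s hs
  have ha' : (0 : ℤ) < a := by exact_mod_cast ha
  set q := (s - x) / a
  set k := (s - x) % a
  have hdiv : a * q + k = s - x := Int.mul_ediv_add_emod (s - x) a
  have hk0 : 0 ≤ k := Int.emod_nonneg (s - x) ha'.ne'
  have hka : k < a := Int.emod_lt_of_pos (s - x) ha'
  have hq : q ≤ 0 := by
    by_contra! hq
    have : (a : ℤ) ≤ a * q := le_mul_of_one_le_right ha'.le hq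
    simp only [mem_Iio] at hs
    omega
  have := sub_mul_mem_of_sub_mem hB (hx ⟨by omega, by omega⟩ : x + k ∈ B) (-q).toNat
  rwa [Int.toNat_of_nonneg (by omega), show x + k - a * -q = s by linarith] at this

end SubClosed

namespace PartitionSeq

variable (lam : PartitionSeq)

def beta (j : ℕ) : ℤ := (lam.parts j : ℤ) - (j + 1)

lemma betaSet_eq_range_beta : lam.betaSet = range lam.beta := rfl

lemma beta_strictAnti : StrictAnti lam.beta :=
  strictAnti_nat_of_succ_lt fun n => by
    have := lam.antitone (Nat.le_succ n)
    simp only [beta, Nat.succ_eq_add_one] at this ⊢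
    omega

lemma exists_parts_le (j : ℕ) : ∃ i, lam.parts i ≤ j :=
  let ⟨N, hN⟩ := lam.eventually_zero
  ⟨N, hN ▸ j.zero_le⟩

def colLen (j : ℕ) : ℕ := Nat.find (lam.exists_parts_le j)

lemma colLen_antitone : Antitone lam.colLen :=
  fun _ _ hjj' => Nat.find_mono fun _ h => h.trans hjj'

variable {lam}

lemma lt_colLen_iff {i j : ℕ} : i < lam.colLen j ↔ j < lam.parts i := by
  rw [colLen, Nat.lt_find_iff]
  exact ⟨fun h => not_le.1 (h i le_rfl), fun h m hm => not_le.2 (h.trans_le (lam.antitone hm))⟩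

variable (lam)

def gap (j : ℕ) : ℤ := j - lam.colLen j

lemma gap_strictMono : StrictMono lam.gap := fun j j' hjj' => by
  have := lam.colLen_antitone hjj'.le
  simp only [gap]
  omega

variable {lam}

lemma gap_lt_beta_iff {j r : ℕ} : lam.gap j < lam.beta r ↔ j < lam.parts r := by
  have := (lt_colLen_iff (lam := lam) (i := r) (j := j))
  simp only [gap, beta]
  omega

lemma hook_eq_beta_sub_gap {r j : ℕ} (h : j < lam.parts r) :
    (lam.hook r j : ℤ) = lam.beta r - lam.gap j := by
  have hr := lt_colLen_iff.2 h
  have hbelow : {i | r < i ∧ j < lam.parts i} = Ioo r (lam.colLen j) := by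
    ext i
    simp only [mem_ofPred_eq, mem_Ioo, lt_colLen_iff]
  rw [hook, hbelow, ← Finset.coe_Ioo, ncard_coe_finset, Nat.card_Ioo]
  simp only [beta, gap]
  omega

lemma range_gap : range lam.gap = (range lam.beta)ᶜ := by
  ext s
  constructor
  · rintro ⟨j, rfl⟩ ⟨k, hk⟩
    simp only [gap, beta] at hk
    rcases lt_or_ge k (lam.colLen j) with hlt | hge
    · have := lt_colLen_iff.1 hlt
      omega
    · have := lt_colLen_iff.not.1 hge.not_gt
      omega
  · intro hs
    have hex : ∃ k, lam.beta k < s := by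
      obtain ⟨N, hN⟩ := lam.eventually_zero
      refine ⟨N + s.natAbs, ?_⟩
      have := lam.antitone (Nat.le_add_right N s.natAbs)
      simp only [beta]
      omega
    have hk : lam.beta (Nat.find hex) < s := Nat.find_spec hex
    set k := Nat.find hex
    simp only [beta] at hk
    refine ⟨(s + k).toNat, ?_⟩
    have hcol : lam.colLen (s + k).toNat = k := by
      refine le_antisymm (not_lt.1 fun h => ?_) ?_
      · have := lt_colLen_iff.1 h
        omega
      · rcases Nat.eq_zero_or_pos k with hzero | hpos
        · omega
        have hmin : ¬ lam.beta (k - 1) < s := Nat.find_min hex (Nat.sub_lt hpos one_pos)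
        have hne : lam.beta (k - 1) ≠ s := fun h => hs ⟨_, h⟩
        simp only [beta] at hmin hne
        have := lt_colLen_iff.2 (show (s + k).toNat < lam.parts (k - 1) by omega)
        omega
    simp only [gap, hcol]
    omega

lemma ncard_hook_lt (r b : ℕ) :
    {j | j < lam.parts r ∧ lam.hook r j < b}.ncard =
      {s | s ∉ range lam.beta ∧ s ∈ Ioo (lam.beta r - b) (lam.beta r)}.ncard := by
  rw [← ncard_image_of_injective _ lam.gap_strictMono.injective]
  congr 1
  ext s
  simp only [mem_image, mem_ofPred_eq, mem_Ioo, ← mem_compl_iff, ← range_gap]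
  constructor
  · rintro ⟨j, ⟨hj, hb⟩, rfl⟩
    have := hook_eq_beta_sub_gap hj
    exact ⟨mem_range_self j, by omega, gap_lt_beta_iff.2 hj⟩
  · rintro ⟨⟨j, rfl⟩, hb, hj⟩
    have hj := gap_lt_beta_iff.1 hj
    have := hook_eq_beta_sub_gap hj
    exact ⟨j, ⟨hj, by omega⟩, rfl⟩

lemma exists_lt_beta_notMem_range {r : ℕ} (hr : 0 < lam.parts r) :
    ∃ s < lam.beta r, s ∉ range lam.beta :=
  ⟨lam.gap 0, gap_lt_beta_iff.2 hr,
    (range_gap (lam := lam) ▸ mem_range_self 0 : lam.gap 0 ∈ (range lam.beta)ᶜ)⟩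

/-- `hB` is the abacus form of `lam` being an `a`-core. -/
lemma isARow_iff {a : ℕ} (ha : 0 < a) (hB : ∀ s ∈ range lam.beta, s - a ∈ range lam.beta)
    {r : ℕ} (hr : 0 < lam.parts r) : IsARow a lam r ↔ lam.beta r + a ∉ range lam.beta := by
  constructor
  · rintro ⟨-, hmax⟩ ⟨r₁, hr₁⟩
    have hlt : r₁ < r := lam.beta_strictAnti.lt_iff_gt.1 (by omega)
    have hres : lam.beta r₁ % a = lam.beta r % a := by rw [hr₁, Int.add_emod_right]
    have heq : lam.parts r₁ = lam.parts r :=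
      le_antisymm (hmax r₁ (hr.trans_le (lam.antitone hlt.le)) hres) (lam.antitone hlt.le)
    have hr₁a : r = r₁ + a := by
      simp only [beta] at hr₁
      omega
    have hrun : Ico (lam.beta r) (lam.beta r + a) ⊆ range lam.beta := by
      rintro s ⟨hs₁, hs₂⟩
      obtain ⟨d, rfl⟩ : ∃ d : ℕ, s = lam.beta r + d := ⟨(s - lam.beta r).toNat, by omega⟩
      have h₁ := lam.antitone (Nat.sub_le r d)
      have h₂ := lam.antitone (show r₁ ≤ r - d by omega)
      refine ⟨r - d, ?_⟩
      simp only [beta]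
      omega
    obtain ⟨s, hs, hsB⟩ := exists_lt_beta_notMem_range hr
    exact hsB (Iio_subset_of_Ico_subset ha hB hrun (by simp only [mem_Iio]; omega))
  · refine fun hnot => ⟨hr, fun r' hr' hres => ?_⟩
    change lam.beta r' ≡ lam.beta r [ZMOD a] at hres
    suffices lam.beta r' ≤ lam.beta r from lam.antitone (lam.beta_strictAnti.le_iff_ge.1 this)
    by_contra! hlt
    obtain ⟨q, hq⟩ := hres.symm.dvd
    have hq₀ : 0 < q := pos_of_mul_pos_right (a := (a : ℤ)) (by omega) (by omega)
    refine hnot ?_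
    have := sub_mul_mem_of_sub_mem hB (mem_range_self r') (q - 1).toNat
    rwa [Int.toNat_of_nonneg (by omega), mul_sub, ← hq, mul_one, sub_sub, sub_sub_cancel]
      at this

end PartitionSeq

section Abacus

variable {a : ℕ} (c : Fin a → ℤ)

/-- The largest element of `Bset a c` congruent to `-i - 1` modulo `a`. -/
def topBeta (i : Fin a) : ℤ := -a * c i - i - 1

def abacus (p : Fin a × ℤ) : ℤ := topBeta c p.1 + a * p.2

variable {c}

@[simp]
lemma abacus_zero (i : Fin a) : abacus c (i, 0) = topBeta c i := by simp [abacus]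

lemma abacus_injective (ha : 0 < a) : Injective (abacus c) := by
  rintro ⟨i, t⟩ ⟨j, u⟩ h
  simp only [abacus, topBeta] at h
  have hmod := congrArg (· % (a : ℤ)) (show (i : ℤ) = j + a * (t - u - c i + c j) by linarith)
  have hlt : ∀ k : Fin a, (k : ℤ) % a = k := fun k =>
    Int.emod_eq_of_lt (by positivity) (by exact_mod_cast k.isLt)
  simp only [Int.add_mul_emod_self_left, hlt] at hmod
  obtain rfl : i = j := Fin.ext (by exact_mod_cast hmod)
  have : (a : ℤ) * (t - u) = 0 := by linarith
  simp only [Prod.mk.injEq, true_and]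
  have := (mul_eq_zero.1 this).resolve_left (by omega)
  omega

lemma abacus_surjective (ha : 0 < a) : Surjective (abacus c) := by
  intro s
  have ha' : (0 : ℤ) < a := by exact_mod_cast ha
  have h₀ := Int.emod_nonneg (-s - 1) ha'.ne'
  have h₁ := Int.emod_lt_of_pos (-s - 1) ha'
  have hdiv := Int.mul_ediv_add_emod (-s - 1) a
  let i : Fin a := ⟨((-s - 1) % a).toNat, by omega⟩
  have hi : (i : ℤ) = (-s - 1) % a := Int.toNat_of_nonneg h₀
  refine ⟨(i, c i - (-s - 1) / a), ?_⟩
  simp only [abacus, topBeta, hi]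
  linarith

lemma abacus_mem_Bset_iff (ha : 0 < a) (p : Fin a × ℤ) : abacus c p ∈ Bset a c ↔ p.2 ≤ 0 := by
  have hBset : ∀ (i : Fin a) (n : ℕ), -(a : ℤ) * (c i + n) - i - 1 = abacus c (i, -n) :=
    fun i n => by simp only [abacus, topBeta]; ring
  constructor
  · rintro ⟨i, n, h⟩
    rw [hBset] at h
    rw [abacus_injective ha h]
    simp
  · intro hp
    refine ⟨p.1, (-p.2).toNat, ?_⟩
    rw [hBset, Int.toNat_of_nonneg (by omega), neg_neg]

lemma topBeta_injective (ha : 0 < a) : Injective (topBeta c) := fun i j h =>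
  congrArg Prod.fst (abacus_injective ha (by simpa using h : abacus c (i, 0) = abacus c (j, 0)))

lemma topBeta_mem_Bset (i : Fin a) : topBeta c i ∈ Bset a c :=
  ⟨i, 0, by simp only [topBeta, Nat.cast_zero, add_zero]⟩

lemma sub_mem_Bset {s : ℤ} (hs : s ∈ Bset a c) : s - a ∈ Bset a c := by
  obtain ⟨i, n, rfl⟩ := hs
  exact ⟨i, n + 1, by push_cast; ring⟩

lemma add_notMem_Bset_iff (ha : 0 < a) {s : ℤ} (hs : s ∈ Bset a c) :
    s + a ∉ Bset a c ↔ s ∈ range (topBeta c) := by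
  obtain ⟨⟨i, t⟩, rfl⟩ := abacus_surjective (c := c) ha s
  have hadd : abacus c (i, t) + a = abacus c (i, t + 1) := by simp only [abacus]; ring
  rw [abacus_mem_Bset_iff ha] at hs
  rw [hadd, abacus_mem_Bset_iff ha]
  simp only [← abacus_zero, (abacus_injective ha).eq_iff, mem_range, Prod.mk.injEq]
  constructor
  · intro ht
    exact ⟨i, rfl, by omega⟩
  · rintro ⟨j, -, rfl⟩
    omega

lemma cast_abacus (ha : 0 < a) (i j : Fin a) (t : ℤ) :
    (abacus c (j, t) : ℚ) = topBeta c i + a * (t - (xcoord a c j - xcoord a c i)) := by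
  have : (a : ℚ) ≠ 0 := by positivity
  simp only [abacus, topBeta, xcoord]
  push_cast
  field_simp
  ring

end Abacus

lemma abacus_notMem_Bset_and_mem_Ioo_iff {a : ℕ} {c : Fin a → ℤ} (ha : 0 < a) (i j : Fin a)
    (t : ℤ) (b : ℕ) :
    (abacus c (j, t) ∉ Bset a c ∧ abacus c (j, t) ∈ Ioo (topBeta c i - b) (topBeta c i)) ↔
      0 < t ∧
        (t : ℚ) ∈ Ioc (xcoord a c j - xcoord a c i - b / a) (xcoord a c j - xcoord a c i) := by
  set y := xcoord a c j - xcoord a c i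
  have ha' : (0 : ℚ) < a := by exact_mod_cast ha
  have hcast := cast_abacus (c := c) ha i j t
  rw [abacus_mem_Bset_iff ha, not_le]
  refine and_congr_right fun ht => ?_
  have hne : (t : ℚ) ≠ y := fun h => by
    have : abacus c (j, t) = abacus c (i, 0) := by
      rw [← Int.cast_inj (α := ℚ), hcast, h, sub_self, mul_zero, add_zero, abacus_zero]
    have := congrArg Prod.snd (abacus_injective ha this)
    simp only at this
    omega
  rw [mem_Ioo, mem_Ioc, ← Int.cast_lt (R := ℚ), ← Int.cast_lt (R := ℚ)]
  push_cast
  rw [hcast, sub_lt_comm (b := (b : ℚ) / a), lt_div_iff₀ ha', le_iff_lt_or_eq, or_iff_left hne]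
  constructor
  · rintro ⟨h₁, h₂⟩
    exact ⟨by linarith, by nlinarith⟩
  · rintro ⟨h₁, h₂⟩
    exact ⟨by linarith, by nlinarith⟩

lemma ncard_notMem_Bset_Ioo {a : ℕ} {c : Fin a → ℤ} (ha : 0 < a) (i : Fin a) (b : ℕ) :
    ({s | s ∉ Bset a c ∧ s ∈ Ioo (topBeta c i - b) (topBeta c i)}.ncard : ℤ) =
      ∑ j : Fin a, (max 0 ⌊xcoord a c j - xcoord a c i⌋ -
        max 0 ⌊xcoord a c j - xcoord a c i - (b : ℚ) / a⌋) := by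
  set y : Fin a → ℚ := fun j => xcoord a c j - xcoord a c i
  set T : Fin a → Set ℤ := fun j => {t : ℤ | 0 < t ∧ (t : ℚ) ∈ Ioc (y j - b / a) (y j)}
  have hset : {s | s ∉ Bset a c ∧ s ∈ Ioo (topBeta c i - b) (topBeta c i)} =
      abacus c '' {p | p.2 ∈ T p.1} := by
    ext s
    obtain ⟨⟨j, t⟩, rfl⟩ := abacus_surjective (c := c) ha s
    rw [(abacus_injective ha).mem_set_image]
    exact abacus_notMem_Bset_and_mem_Ioo_iff ha i j t b
  have hfin : ∀ j, (T j).Finite := fun j => by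
    simp only [T, setOf_pos_int_mem_Ioc, Finset.finite_toSet]
  rw [hset, ncard_image_of_injective _ (abacus_injective ha), ncard_setOf_snd_mem T hfin,
    Nat.cast_sum]
  refine Finset.sum_congr rfl fun j _ => ncard_pos_int_mem_Ioc ?_
  have : (0 : ℚ) ≤ b / a := by positivity
  linarith

section Core

variable {a : ℕ} {c : Fin a → ℤ} {lam : PartitionSeq}

lemma isARow_iff_beta_mem_range_topBeta (ha : 0 < a) (hlam : lam.betaSet = Bset a c) {r : ℕ}
    (hr : 0 < lam.parts r) : IsARow a lam r ↔ lam.beta r ∈ range (topBeta c) := by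
  rw [PartitionSeq.betaSet_eq_range_beta] at hlam
  rw [PartitionSeq.isARow_iff ha (hlam ▸ fun _ => sub_mem_Bset) hr, hlam,
    add_notMem_Bset_iff ha (hlam ▸ mem_range_self r)]

lemma skewLength_eq_sum (ha : 0 < a) (hlam : lam.betaSet = Bset a c) {row : Fin a → ℕ}
    (hrow : ∀ i, lam.beta (row i) = topBeta c i) (b : ℕ) :
    skewLength a b lam = ∑ i, {j | j < lam.parts (row i) ∧ lam.hook (row i) j < b}.ncard := by
  have hrow_inj : Injective row := fun i i' h =>
    topBeta_injective ha (by rw [← hrow, ← hrow, h])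
  have hcells : {cell : ℕ × ℕ |
      IsARow a lam cell.1 ∧ cell.2 < lam.parts cell.1 ∧ lam.hook cell.1 cell.2 < b} =
      Prod.map row id '' {p | p.2 ∈ {j | j < lam.parts (row p.1) ∧ lam.hook (row p.1) j < b}} := by
    ext ⟨r, j⟩
    simp only [mem_ofPred_eq, mem_image, Prod.exists, Prod.map, id, Prod.mk.injEq]
    constructor
    · rintro ⟨hA, hj, hb⟩
      obtain ⟨i, hi⟩ := (isARow_iff_beta_mem_range_topBeta ha hlam (by omega)).1 hA
      obtain rfl : row i = r := lam.beta_strictAnti.injective (by rw [hrow, hi])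
      exact ⟨i, j, ⟨hj, hb⟩, rfl, rfl⟩
    · rintro ⟨i, j, ⟨hj, hb⟩, rfl, rfl⟩
      exact ⟨(isARow_iff_beta_mem_range_topBeta ha hlam (by omega)).2 ⟨i, (hrow i).symm⟩, hj, hb⟩
  rw [skewLength, hcells, ncard_image_of_injective _ (hrow_inj.prodMap injective_id)]
  exact ncard_setOf_snd_mem (fun i => {j | j < lam.parts (row i) ∧ lam.hook (row i) j < b})
    fun i => (finite_Iio (lam.parts (row i))).subset fun j hj => hj.1

end Core

theorem stmt13_general (a b : ℕ) (ha : 0 < a) (c : Fin a → ℤ)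
    (lam : PartitionSeq) (hlam : lam.betaSet = Bset a c) :
    (skewLength a b lam : ℤ) =
      ∑ i : Fin a, ∑ j : Fin a,
        (max 0 ⌊xcoord a c i - xcoord a c j⌋ -
          max 0 ⌊xcoord a c i - xcoord a c j - (b : ℚ) / a⌋) := by
  have hB : range lam.beta = Bset a c := hlam
  choose row hrow using fun i => (hB ▸ topBeta_mem_Bset i : topBeta c i ∈ range lam.beta)
  rw [skewLength_eq_sum ha hlam hrow, Nat.cast_sum, Finset.sum_comm]
  refine Finset.sum_congr rfl fun i _ => ?_
  rw [PartitionSeq.ncard_hook_lt, hrow, hB, ncard_notMem_Bset_Ioo ha]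

/-- the skew length of an `(a,b)`-core is
`Σ_{i,j} (⌊x_i − x_j⌋₀ − ⌊x_i − x_j − b/a⌋₀)` where `⌊y⌋₀ = max(0, ⌊y⌋)`. -/
theorem stmt13 (a b : ℕ) (ha : 0 < a) (hab : a < b) (hco : Nat.Coprime a b)
    (c : Fin a → ℤ) (hc : (∑ i, c i) = 0)
    (lam : PartitionSeq) (hlam : lam.betaSet = Bset a c) (hbcore : lam.IsCore b) :
    (skewLength a b lam : ℤ) =
      ∑ i : Fin a, ∑ j : Fin a,
        (max 0 ⌊xcoord a c i - xcoord a c j⌋ -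
          max 0 ⌊xcoord a c i - xcoord a c j - (b : ℚ) / a⌋) :=
  stmt13_general a b ha c lam hlam
end
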